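/- Lemma 3.6 (determinant factorization at t₂ = 1): for every i ≥ 1, det B_{2i}(q,t,1;λ) = det B̄_i(q,t;λ) · ∏_{j=2}^{i} (q^{2(2j−2)}t^{−1} + q^{−2(2j−2)}t − λ − λ^{−1}) in K[λ,λ^{−1}]. -/

import Mathlib

noncomputable section

open LaurentPolynomial

/-- The field `K = ℚ(q, t)` of rational functions in two indeterminates. -/
abbrev K : Type := FractionRing (MvPolynomial (Fin 2) ℚ)

def q : K := algebraMap (MvPolynomial (Fin 2) ℚ) K (MvPolynomial.X 0)
def t : K := algebraMap (MvPolynomial (Fin 2) ℚ) K (MvPolynomial.X 1)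

/-- `{m} = q^m − q^{−m}`. -/
def br (m : ℤ) : K := q ^ m - q ^ (-m)

/-- The balanced q-binomial coefficient `[n choose m]_{q²}`. -/
def qbinom (n m : ℕ) : K :=
  ∏ k ∈ Finset.range m,
    (q ^ (2 * ((n : ℤ) - k)) - q ^ (-(2 * ((n : ℤ) - k)))) /
      (q ^ (2 * ((m : ℤ) - k)) - q ^ (-(2 * ((m : ℤ) - k))))

/-- `α_k^{(i)} = (−1)^{i−k} [2i−1 choose i−k]_{q²}`. -/
def alpha (i k : ℕ) : K := (-1 : K) ^ (i - k) * qbinom (2 * i - 1) (i - k)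

/-- `[m]_{q²} = (q^{2m} − q^{−2m})/(q² − q^{−2})`. -/
def qnum (m : ℤ) : K := (q ^ (2 * m) - q ^ (-(2 * m))) / (q ^ (2 : ℤ) - q ^ (-2 : ℤ))

/-- `γ_p = q^{2p}t^{−1} + q^{−2p}t − λ − λ^{−1}` as an element of `K[λ,λ^{−1}]`. -/
def gamL (p : ℕ) : LaurentPolynomial K :=
  C (q ^ (2 * (p : ℤ)) * t⁻¹ + q ^ (-(2 * (p : ℤ))) * t) - T 1 - T (-1)

/-- The matrix `B_{2i}(q,t,1;λ)` (the matrix `B_{2i}` with `t₁ = t`, `t₂ = 1`),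
over `K[λ,λ^{−1}]`, with rows and columns indexed by `0,…,2i−1`. -/
def B2 (i : ℕ) : Matrix (Fin (2 * i)) (Fin (2 * i)) (LaurentPolynomial K) :=
  Matrix.of fun p N =>
    if (p : ℕ) = 0 then
      (if (N : ℕ) % 2 = 1 then C (alpha i (((N : ℕ) + 1) / 2)) else 0)
    else if (N : ℕ) = 0 then C (qnum ((p : ℕ) : ℤ))
    else if (N : ℕ) = (p : ℕ) then gamL (p : ℕ)
    else if (N : ℕ) < (p : ℕ) ∧ ((p : ℕ) - (N : ℕ)) % 2 = 0 then
      C (-((br ((p : ℕ) + (N : ℕ) : ℤ) - br ((p : ℕ) - (N : ℕ) : ℤ)) * (t - t⁻¹)))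
    else 0

/-- The reduced matrix `B̄_i(q,t;λ)`, over `K[λ,λ^{−1}]`, rows and columns indexed by
`0,…,i`: row 0 is `(0, α_1^{(i)}, …, α_i^{(i)})`; column 0 carries `[2j−1]_{q²}`;
the diagonal carries `γ_{2j−1}`; below the diagonal sit the entries
`−({2(j+k−1)} − {2(j−k)})(t − t^{−1})`; everything above the diagonal (outside row 0)
vanishes. -/
def Bbar (i : ℕ) : Matrix (Fin (i + 1)) (Fin (i + 1)) (LaurentPolynomial K) :=
  Matrix.of fun j k =>
    if (j : ℕ) = 0 then (if (k : ℕ) = 0 then 0 else C (alpha i (k : ℕ)))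
    else if (k : ℕ) = 0 then C (qnum (2 * ((j : ℕ) : ℤ) - 1))
    else if (k : ℕ) = (j : ℕ) then gamL (2 * (j : ℕ) - 1)
    else if (k : ℕ) < (j : ℕ) then
      C (-((br (2 * (((j : ℕ) : ℤ) + ((k : ℕ) : ℤ) - 1)) - br (2 * (((j : ℕ) : ℤ) - ((k : ℕ) : ℤ))))
        * (t - t⁻¹)))
    else 0

/-! Reorder the indices of `B_{2i}` as `0, 1, 3, …, 2i−1` followed by `2, 4, …, 2i−2`.
Row `0` vanishes in even columns, and in every other row the nonzero entries sit in column `0`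
and in columns of the row's own parity up to the diagonal. So in the new order the matrix is block
lower triangular: the first block is `B̄_i` and the second is lower triangular with diagonal
`γ_2, γ_4, …, γ_{2i−2}`. -/

namespace Matrix

variable {n ι κ R : Type*} [Fintype n] [DecidableEq n] [Fintype ι] [DecidableEq ι]
  [Fintype κ] [DecidableEq κ] [LinearOrder κ] [CommRing R]

theorem det_eq_det_submatrix_mul_prod_diag (M : Matrix n n R) (e : ι ⊕ κ ≃ n)
    (h₁₂ : ∀ a b, M (e (.inl a)) (e (.inr b)) = 0)
    (h₂₂ : ∀ b b', b < b' → M (e (.inr b)) (e (.inr b')) = 0) :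
    M.det = (M.submatrix (e ∘ .inl) (e ∘ .inl)).det * ∏ b, M (e (.inr b)) (e (.inr b)) := by
  have hblocks : M.submatrix e e = fromBlocks (M.submatrix (e ∘ .inl) (e ∘ .inl)) 0
      (M.submatrix (e ∘ .inr) (e ∘ .inl)) (M.submatrix (e ∘ .inr) (e ∘ .inr)) := by
    ext (a | a) (b | b) <;> simp [h₁₂]
  have hlower : (M.submatrix (e ∘ .inr) (e ∘ .inr)).IsLowerTriangular := h₂₂
  rw [← det_submatrix_equiv_self e, hblocks, det_fromBlocks_zero₁₂,
    det_of_isLowerTriangular _ hlower]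
  rfl

end Matrix

section B2Entries

variable {i : ℕ} {p N : Fin (2 * i)}

theorem B2_apply_eq_zero_of_even_col (hN₀ : (N : ℕ) ≠ 0) (hN : (N : ℕ) % 2 = 0)
    (hp : (p : ℕ) = 0 ∨ (p : ℕ) % 2 = 1) : B2 i p N = 0 := by
  simp only [B2, Matrix.of_apply]
  split_ifs <;> first | rfl | omega

theorem B2_apply_eq_zero_of_lt (hp : (p : ℕ) ≠ 0) (h : (p : ℕ) < N) : B2 i p N = 0 := by
  simp only [B2, Matrix.of_apply]
  split_ifs <;> first | rfl | omega

theorem B2_apply_self (hp : (p : ℕ) ≠ 0) : B2 i p p = gamL p := by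
  simp [B2, hp]

end B2Entries

/-- `inl 0 ↦ 0` since `2 * 0 - 1 = 0` in `ℕ`. -/
def oddEvenEquiv (m : ℕ) : Fin (m + 1 + 1) ⊕ Fin m ≃ Fin (2 * (m + 1)) :=
  Equiv.ofBijective
    (Sum.elim (fun j => ⟨2 * j - 1, by omega⟩) (fun k => ⟨2 * k + 2, by omega⟩))
    ((Fintype.bijective_iff_injective_and_card _).mpr
      ⟨by rintro (a | a) (b | b) h <;> simp [Fin.ext_iff] at h ⊢ <;> omega, by simp; omega⟩)

@[simp]
theorem oddEvenEquiv_inl_val (m : ℕ) (j : Fin (m + 1 + 1)) :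
    (oddEvenEquiv m (.inl j) : ℕ) = 2 * j - 1 := rfl

@[simp]
theorem oddEvenEquiv_inr_val (m : ℕ) (k : Fin m) :
    (oddEvenEquiv m (.inr k) : ℕ) = 2 * k + 2 := rfl

theorem B2_submatrix_oddEvenEquiv_inl (m : ℕ) :
    (B2 (m + 1)).submatrix (oddEvenEquiv m ∘ .inl) (oddEvenEquiv m ∘ .inl) = Bbar (m + 1) := by
  refine Matrix.ext fun a b => ?_
  simp only [Matrix.submatrix_apply, Function.comp_apply]
  have hp := oddEvenEquiv_inl_val m a
  have hN := oddEvenEquiv_inl_val m b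
  generalize oddEvenEquiv m (.inl a) = p at hp ⊢
  generalize oddEvenEquiv m (.inl b) = N at hN ⊢
  simp only [B2, Bbar, Matrix.of_apply]
  split_ifs <;> first | rfl | omega | (congr <;> omega)

theorem prod_Icc_gamL (m : ℕ) :
    ∏ j ∈ Finset.Icc 2 (m + 1), gamL (2 * j - 2) = ∏ k : Fin m, gamL (2 * k + 2) := by
  rw [Fin.prod_univ_eq_prod_range (fun k => gamL (2 * k + 2)), ← Finset.Ico_add_one_right_eq_Icc,
    Finset.prod_Ico_eq_prod_range]
  refine Finset.prod_congr (by simp) fun k _ => ?_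
  congr 1
  omega

theorem determinant_factorization_at_t2_eq_one (i : ℕ) (hi : 1 ≤ i) :
    (B2 i).det = (Bbar i).det * ∏ j ∈ Finset.Icc 2 i, gamL (2 * j - 2) := by
  obtain ⟨m, rfl⟩ : ∃ m, i = m + 1 := ⟨i - 1, by omega⟩
  rw [Matrix.det_eq_det_submatrix_mul_prod_diag (B2 (m + 1)) (oddEvenEquiv m)
    (fun a b => B2_apply_eq_zero_of_even_col (by simp) (by simp) (by simp; omega))
    (fun b b' h => B2_apply_eq_zero_of_lt (by simp) (by simp; omega)),
    B2_submatrix_oddEvenEquiv_inl, prod_Icc_gamL]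
  congr 1
  refine Finset.prod_congr rfl fun k _ => ?_
  rw [B2_apply_self (by simp), oddEvenEquiv_inr_val]
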